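/- Under the Lazy Set axioms A0–A2, for all events X, Y: if X ⇒ Y then ¬(Y < X), where ⇒ is the auxiliary relation defined on Cnt events and their associated Add⁰/Rem¹ events. -/

import Mathlib

/-- Event type: Add, Rem, or Contains. -/
inductive EType | add | rem | cnt
deriving DecidableEq

/-- Status of an event: 0, 1, or f (failed). -/
inductive Status | s0 | s1 | sf
deriving DecidableEq

open EType Status

/-- A Tarskian system execution satisfying the Lazy Set axioms A0–A2.
Events are typed Add/Rem/Cnt; Add and Rem events are actions (with
Begin(E) = End(E) = E) and the actions are linearly ordered by the temporal
precedence relation `lt`; Cnt events are high-level with Begin(E) < End(E);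
`γ` is defined on the Op¹ events and satisfies axioms A1 and A2. -/
structure LazySys where
  E : Type
  lt : E → E → Prop
  typ : E → EType
  χ : E → Status
  kval : E → ℕ
  Begin : E → E
  End' : E → E
  γ : E → E
  action : E → Prop
  lt_irrefl : ∀ e, ¬ lt e e
  lt_trans : ∀ a b c, lt a b → lt b c → lt a c
  act_lin : ∀ a b, action a → action b → a ≠ b → lt a b ∨ lt b a
  addRem_action : ∀ e, typ e ≠ EType.cnt →
    action e ∧ Begin e = e ∧ End' e = e
  begin_end_action : ∀ e, action (Begin e) ∧ action (End' e)
  cnt_interval : ∀ e, typ e = EType.cnt → lt (Begin e) (End' e)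
  lt_iff : ∀ a b, lt a b ↔ lt (End' a) (Begin b)
  A1 : ∀ A, χ A = Status.s1 →
    typ (γ A) = EType.add ∧ χ (γ A) = Status.s0 ∧ kval (γ A) = kval A ∧
    lt (γ A) (End' A) ∧
    ¬ ∃ R, typ R = EType.rem ∧ χ R = Status.s1 ∧ γ R = γ A ∧
      lt (γ A) R ∧ lt R A
  A2 : ∀ A B, typ A = EType.add → χ A = Status.s0 → χ B = Status.s0 →
    lt A B → kval A = kval B →
    ∃ R, typ R = EType.rem ∧ χ R = Status.s1 ∧ γ R = A ∧ lt R (End' B)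

/-- The auxiliary relation ⇒ used in the linearization proof. -/
def LazySys.arrow (S : LazySys) (X Y : S.E) : Prop :=
  (S.typ Y = EType.cnt ∧ S.χ Y = Status.s1 ∧ X = S.γ Y) ∨
  (S.typ X = EType.cnt ∧ S.χ X = Status.s1 ∧
    S.typ Y = EType.rem ∧ S.χ Y = Status.s1 ∧ S.γ Y = S.γ X) ∨
  (S.typ X = EType.rem ∧ S.χ X = Status.s1 ∧
    S.typ Y = EType.cnt ∧ S.χ Y = Status.s0 ∧
    S.kval X = S.kval Y ∧ ¬ S.lt Y X ∧ S.lt (S.γ X) Y) ∨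
  (S.typ X = EType.cnt ∧ S.χ X = Status.s0 ∧
    S.typ Y = EType.add ∧ S.χ Y = Status.s0 ∧
    S.kval X = S.kval Y ∧ ¬ S.lt Y X)

/-!
Clauses (2) and (3) of `⇒` exclude `Y < X` by definition. For clause (1), `γ(C) ⇒ C`, axiom A1
puts `γ(C)` before `End(C)`; for `C ⇒ R` with `γ(R) = γ(C)`, A1 applied to `R` puts `R` after
`γ(C)`, and A1 applied to `C` forbids such an `R` before `C`.
-/

namespace LazySys

variable (S : LazySys)

theorem begin_eq_self_of_ne_cnt {e : S.E} (he : S.typ e ≠ cnt) : S.Begin e = e :=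
  (S.addRem_action e he).2.1

theorem end_eq_self_of_ne_cnt {e : S.E} (he : S.typ e ≠ cnt) : S.End' e = e :=
  (S.addRem_action e he).2.2

theorem lt_asymm {a b : S.E} (hab : S.lt a b) : ¬ S.lt b a :=
  fun hba => S.lt_irrefl a (S.lt_trans a b a hab hba)

theorem not_lt_γ {A : S.E} (hA : S.χ A = s1) : ¬ S.lt A (S.γ A) := by
  obtain ⟨hadd, -, -, hγ_end, -⟩ := S.A1 A hA
  intro hlt
  have hend_γ : S.lt (S.End' A) (S.γ A) := by
    rw [S.lt_iff, S.begin_eq_self_of_ne_cnt (by simp [hadd])] at hlt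
    exact hlt
  exact S.lt_asymm hγ_end hend_γ

theorem not_lt_of_γ_eq {A R : S.E} (hA : S.χ A = s1) (hR : S.typ R = rem) (hR1 : S.χ R = s1)
    (hγ : S.γ R = S.γ A) : ¬ S.lt R A := by
  obtain ⟨-, -, -, -, hno_rem⟩ := S.A1 A hA
  obtain ⟨-, -, -, hγR_end, -⟩ := S.A1 R hR1
  rw [S.end_eq_self_of_ne_cnt (by simp [hR]), hγ] at hγR_end
  exact fun hlt => hno_rem ⟨R, hR, hR1, hγ, hγR_end, hlt⟩

end LazySys

/-- Under the Lazy Set axioms A0–A2, for all events X, Y: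
if X ⇒ Y then ¬(Y < X). -/
theorem stmt6 (S : LazySys) :
    ∀ X Y : S.E, S.arrow X Y → ¬ S.lt Y X := by
  rintro X Y (⟨-, hY1, rfl⟩ | ⟨-, hX1, hYr, hY1, hγ⟩ | ⟨-, -, -, -, -, hnot, -⟩ |
    ⟨-, -, -, -, -, hnot⟩)
  · exact S.not_lt_γ hY1
  · exact S.not_lt_of_γ_eq hX1 hYr hY1 hγ
  · exact hnot
  · exact hnot
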